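/- arXiv:1007.3406 — 7 statements merged into one kernel-verified Lean document; each statement's English description precedes it below -/
import Mathlib

section
/- For every integer a ≥ 1, the polynomial P_{4,a}(x) = (20a⁴−2)x⁴ + (16a⁵+4a)x³ + (16a⁶+4a²)x² + 8a³x + 1 is irreducible over the rationals. -/
/-!
The reversal `X⁴ + 8a³X³ + (16a⁶ + 4a²)X² + (16a⁵ + 4a)X + (20a⁴ - 2)` of `P_{4,a}` is
Eisenstein at `2`: its lower coefficients are even and its constant term is `2 mod 4`.
Reversal is multiplicative over a domain, so `P_{4,a}` is irreducible over `ℤ`, hence over `ℚ` by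
Gauss's lemma.
-/

open Polynomial

namespace Polynomial

section NoZeroDivisors

variable {R : Type*} [Semiring R] [NoZeroDivisors R]

noncomputable def mirrorMulEquiv : R[X] ≃* R[X] where
  toFun := mirror
  invFun := mirror
  left_inv := mirror_involutive
  right_inv := mirror_involutive
  map_mul' p q := mirror_mul_of_domain p q

theorem irreducible_mirror_iff {f : R[X]} : Irreducible f.mirror ↔ Irreducible f :=
  MulEquiv.irreducible_iff (x := f) mirrorMulEquiv

end NoZeroDivisors

theorem isPrimitive_mirror_iff {R : Type*} [CommSemiring R] [NoZeroDivisors R] {f : R[X]} :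
    f.mirror.IsPrimitive ↔ f.IsPrimitive := by
  simp only [isPrimitive_iff_isUnit_of_C_dvd]
  refine forall_congr' fun r => imp_congr_left ?_
  have h : (C r).mirror ∣ f.mirror ↔ C r ∣ f := map_dvd_iff mirrorMulEquiv
  rwa [mirror_C] at h

theorem irreducible_of_eisenstein_criterion_mirror {R : Type*} [CommRing R] [IsDomain R]
    {f : R[X]} {P : Ideal R} (hP : P.IsPrime) (hf0 : f.coeff 0 ∉ P)
    (hfP : ∀ n, 0 < n → f.coeff n ∈ P) (hfl : f.leadingCoeff ∉ P ^ 2) (hfd0 : 0 < f.natDegree)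
    (hu : f.IsPrimitive) : Irreducible f := by
  have htrail : f.natTrailingDegree = 0 :=
    natTrailingDegree_eq_zero.mpr (Or.inr fun h => hf0 (h ▸ P.zero_mem))
  have hdeg : f.mirror.degree = f.natDegree := by
    rw [degree_eq_natDegree (mirror_eq_zero.not.mpr hu.ne_zero), mirror_natDegree]
  rw [← irreducible_mirror_iff]
  refine irreducible_of_eisenstein_criterion hP ?_ ?_ ?_ ?_ (isPrimitive_mirror_iff.mpr hu)
  · rwa [mirror_leadingCoeff, trailingCoeff, htrail]
  · intro n hn
    rw [hdeg, Nat.cast_lt] at hn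
    rw [coeff_mirror, htrail, add_zero, revAt_le hn.le]
    exact hfP _ (by omega)
  · exact hdeg ▸ Nat.cast_pos.mpr hfd0
  · rwa [coeff_mirror, htrail, add_zero, revAt_zero]

end Polynomial

noncomputable def P4 (a : ℤ) : ℤ[X] :=
  C (20 * a ^ 4 - 2) * X ^ 4 + C (16 * a ^ 5 + 4 * a) * X ^ 3
    + C (16 * a ^ 6 + 4 * a ^ 2) * X ^ 2 + C (8 * a ^ 3) * X + 1

theorem P4_natDegree (a : ℤ) : (P4 a).natDegree = 4 := by
  rw [P4]
  compute_degree!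
  omega

theorem P4_coeff_zero (a : ℤ) : (P4 a).coeff 0 = 1 := by
  simp only [P4, coeff_add, coeff_C_mul, coeff_X_pow, coeff_one, coeff_X]
  norm_num

theorem P4_leadingCoeff (a : ℤ) : (P4 a).leadingCoeff = 20 * a ^ 4 - 2 := by
  rw [leadingCoeff, P4_natDegree]
  simp only [P4, coeff_add, coeff_C_mul, coeff_X_pow, coeff_one, coeff_X]
  norm_num

theorem two_dvd_P4_coeff (a : ℤ) {n : ℕ} (hn : 0 < n) : 2 ∣ (P4 a).coeff n := by
  simp only [P4, coeff_add, coeff_C_mul, coeff_X_pow, coeff_one, coeff_X]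
  split_ifs <;> omega

theorem P4_isPrimitive (a : ℤ) : (P4 a).IsPrimitive := fun r hr =>
  isUnit_of_dvd_one (P4_coeff_zero a ▸ (C_dvd_iff_dvd_coeff r _).mp hr 0)

theorem P4_irreducible (a : ℤ) : Irreducible (P4 a) := by
  refine irreducible_of_eisenstein_criterion_mirror
    ((Ideal.span_singleton_prime two_ne_zero).mpr Int.prime_two) ?_ ?_ ?_ ?_ (P4_isPrimitive a)
  · rw [Ideal.mem_span_singleton, P4_coeff_zero]
    decide
  · exact fun n hn => Ideal.mem_span_singleton.mpr (two_dvd_P4_coeff a hn)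
  · rw [Ideal.span_singleton_pow, Ideal.mem_span_singleton, P4_leadingCoeff]
    omega
  · rw [P4_natDegree]
    norm_num

open Polynomial in
theorem P4a_irreducible_general (a : ℤ) :
    Irreducible ((C (20 * a ^ 4 - 2) * X ^ 4 + C (16 * a ^ 5 + 4 * a) * X ^ 3
      + C (16 * a ^ 6 + 4 * a ^ 2) * X ^ 2 + C (8 * a ^ 3) * X + 1).map (Int.castRingHom ℚ)) :=
  (IsPrimitive.Int.irreducible_iff_irreducible_map_cast (P4_isPrimitive a)).mp (P4_irreducible a)

open Polynomial in
theorem P4a_irreducible (a : ℤ) (ha : 1 ≤ a) :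
    Irreducible ((C (20 * a ^ 4 - 2) * X ^ 4 + C (16 * a ^ 5 + 4 * a) * X ^ 3
      + C (16 * a ^ 6 + 4 * a ^ 2) * X ^ 2 + C (8 * a ^ 3) * X + 1).map (Int.castRingHom ℚ)) :=
  P4a_irreducible_general a
end

section
/- For every integer a ≥ 1, the polynomial P_{5,a}(x) = (56a⁵−2)x⁵ + (56a⁶+4a)x⁴ + (80a⁷+4a²)x³ + (100a⁸+8a³)x² + 20a⁴x + 1 is irreducible over the rationals. -/
open Polynomial

private lemma irr_of_reverse_irr (f : ℚ[X]) (h0 : f.coeff 0 ≠ 0)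
    (hrev : Irreducible f.reverse) : Irreducible f := by
  have hf0 : f ≠ 0 := fun h => h0 (by simp [h])
  constructor
  · intro hu
    rcases Polynomial.isUnit_iff.mp hu with ⟨c, hc, rfl⟩
    exact hrev.not_isUnit (by simpa [Polynomial.reverse, Polynomial.reflect_C] using hu)
  · rintro g h rfl
    have hrevmul : (g * h).reverse = g.reverse * h.reverse :=
      Polynomial.reverse_mul_of_domain g h
    have hg0 : g.coeff 0 ≠ 0 := fun hg => h0 (by simp [Polynomial.mul_coeff_zero, hg])
    have hh0 : h.coeff 0 ≠ 0 := fun hh => h0 (by simp [Polynomial.mul_coeff_zero, hh])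
    have key : ∀ p : ℚ[X], p.coeff 0 ≠ 0 → IsUnit p.reverse → IsUnit p := by
      intro p hp hu
      have hnd : p.reverse.natDegree = 0 := Polynomial.natDegree_eq_zero_of_isUnit hu
      rw [Polynomial.reverse_natDegree,
        Polynomial.natTrailingDegree_eq_zero_of_constantCoeff_ne_zero hp, Nat.sub_zero] at hnd
      rw [Polynomial.eq_C_of_natDegree_eq_zero hnd]
      exact (Polynomial.isUnit_C).mpr (isUnit_iff_ne_zero.mpr hp)
    rcases hrev.isUnit_or_isUnit hrevmul with hu | hu
    · exact Or.inl (key g hg0 hu)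
    · exact Or.inr (key h hh0 hu)

open Polynomial in
theorem P5a_irreducible (a : ℤ) (ha : 1 ≤ a) :
    Irreducible ((C (56 * a ^ 5 - 2) * X ^ 5 + C (56 * a ^ 6 + 4 * a) * X ^ 4
      + C (80 * a ^ 7 + 4 * a ^ 2) * X ^ 3 + C (100 * a ^ 8 + 8 * a ^ 3) * X ^ 2
      + C (20 * a ^ 4) * X + 1).map (Int.castRingHom ℚ)) := by
  have h5 : (1:ℤ) ≤ a ^ 5 := one_le_pow₀ ha
  have ha2 : (2:ℤ) ≤ 56 * a ^ 5 := by linarith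
  -- the reversed polynomial over ℤ
  set Q : ℤ[X] := X ^ 5 + C (20 * a ^ 4) * X ^ 4 + C (100 * a ^ 8 + 8 * a ^ 3) * X ^ 3
      + C (80 * a ^ 7 + 4 * a ^ 2) * X ^ 2 + C (56 * a ^ 6 + 4 * a) * X + C (56 * a ^ 5 - 2)
      with hQ
  have hQmonic : Q.Monic := by
    unfold Q
    monicity!
  have hQdeg : Q.degree = 5 := by
    unfold Q
    compute_degree!
  have hQirr : Irreducible Q := by
    apply Polynomial.irreducible_of_eisenstein_criterion
      (P := Ideal.span {(2:ℤ)})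
    · exact Ideal.span_singleton_prime (by norm_num) |>.mpr Int.prime_two
    · rw [hQmonic.leadingCoeff, Ideal.mem_span_singleton]
      norm_num
    · intro n hn
      rw [hQdeg] at hn
      have hn5 : n < 5 := by exact_mod_cast hn
      rw [Ideal.mem_span_singleton]
      interval_cases n <;>
        · simp only [hQ, coeff_add, coeff_C_mul, coeff_X_pow, coeff_C, coeff_X]
          norm_num
          omega
    · rw [hQdeg]; norm_num
    · rw [Ideal.span_singleton_pow, Ideal.mem_span_singleton]
      have : Q.coeff 0 = 56 * a ^ 5 - 2 := by
        simp only [hQ, coeff_add, coeff_C_mul, coeff_X_pow, coeff_C, coeff_X]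
        norm_num
      rw [this]
      intro ⟨k, hk⟩
      omega
    · exact hQmonic.isPrimitive
  have hQmapirr : Irreducible (Q.map (Int.castRingHom ℚ)) :=
    (Polynomial.IsPrimitive.Int.irreducible_iff_irreducible_map_cast hQmonic.isPrimitive).mp hQirr
  apply irr_of_reverse_irr
  · simp [coeff_map, coeff_add, coeff_C_mul, coeff_X_pow, coeff_C, coeff_X]
  · have hlc : ((56 * a ^ 5 - 2 : ℤ) : ℚ) ≠ 0 := by
      intro h
      rw [Int.cast_eq_zero] at h
      omega
    have hnd : ((C (56 * a ^ 5 - 2) * X ^ 5 + C (56 * a ^ 6 + 4 * a) * X ^ 4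
      + C (80 * a ^ 7 + 4 * a ^ 2) * X ^ 3 + C (100 * a ^ 8 + 8 * a ^ 3) * X ^ 2
      + C (20 * a ^ 4) * X + 1).map (Int.castRingHom ℚ)).natDegree = 5 := by
      simp only [Polynomial.map_add, Polynomial.map_mul, Polynomial.map_pow, map_C, map_X,
        Polynomial.map_one]
      compute_degree!
      omega
    have e1 : ((C (56 * a ^ 5 - 2) * X ^ 5 + C (56 * a ^ 6 + 4 * a) * X ^ 4
      + C (80 * a ^ 7 + 4 * a ^ 2) * X ^ 3 + C (100 * a ^ 8 + 8 * a ^ 3) * X ^ 2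
      + C (20 * a ^ 4) * X + 1).map (Int.castRingHom ℚ))
        = C ((56 * a ^ 5 - 2 : ℤ) : ℚ) * X ^ 5 + C ((56 * a ^ 6 + 4 * a : ℤ) : ℚ) * X ^ 4
      + C ((80 * a ^ 7 + 4 * a ^ 2 : ℤ) : ℚ) * X ^ 3 + C ((100 * a ^ 8 + 8 * a ^ 3 : ℤ) : ℚ) * X ^ 2
      + C ((20 * a ^ 4 : ℤ) : ℚ) * X ^ 1 + C (1 : ℚ) * X ^ 0 := by
      simp only [Polynomial.map_add, Polynomial.map_mul, Polynomial.map_pow, map_C, map_X,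
        Polynomial.map_one, pow_one, pow_zero, mul_one, map_one, Int.coe_castRingHom]
    have hrev_eq : ((C (56 * a ^ 5 - 2) * X ^ 5 + C (56 * a ^ 6 + 4 * a) * X ^ 4
      + C (80 * a ^ 7 + 4 * a ^ 2) * X ^ 3 + C (100 * a ^ 8 + 8 * a ^ 3) * X ^ 2
      + C (20 * a ^ 4) * X + 1).map (Int.castRingHom ℚ)).reverse = Q.map (Int.castRingHom ℚ) := by
      rw [Polynomial.reverse, hnd, e1]
      simp only [reflect_add, reflect_C_mul_X_pow]
      rw [show Polynomial.revAt 5 5 = 0 from revAt_le (by norm_num),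
        show Polynomial.revAt 5 4 = 1 from revAt_le (by norm_num),
        show Polynomial.revAt 5 3 = 2 from revAt_le (by norm_num),
        show Polynomial.revAt 5 2 = 3 from revAt_le (by norm_num),
        show Polynomial.revAt 5 1 = 4 from revAt_le (by norm_num),
        show Polynomial.revAt 5 0 = 5 from revAt_le (by norm_num), hQ]
      simp only [Polynomial.map_add, Polynomial.map_mul, Polynomial.map_pow, map_C, map_X,
        Int.coe_castRingHom]
      push_cast
      simp only [Polynomial.C_1]
      ring
    rw [hrev_eq]
    exact hQmapirr
end

section
/- For every integer a ≥ 1, the polynomial P_{3,a}(x) = (8a³−2)x³ + (4a⁴+4a)x² + 4a²x + 1 is irreducible over the rationals. -/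
/-!
A cubic over `ℚ` is irreducible as soon as it has no rational root. A root `r` of `P_{3,a}`
is nonzero, because the constant term is `1`, so `r⁻¹` is a root of the reversed polynomial
`x³ + 4a²x² + (4a⁴ + 4a)x + 8a³ − 2`. That polynomial is monic over `ℤ`, hence `r⁻¹` is an
integer; but modulo `4` it reduces to `x³ + 2`, which has no root in `ℤ/4`.
-/

open Polynomial

noncomputable def P3 (a : ℤ) : ℤ[X] :=
  C (8 * a ^ 3 - 2) * X ^ 3 + C (4 * a ^ 4 + 4 * a) * X ^ 2 + C (4 * a ^ 2) * X + 1

noncomputable def reversedP3 (a : ℤ) : ℤ[X] :=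
  X ^ 3 + C (4 * a ^ 2) * X ^ 2 + C (4 * a ^ 4 + 4 * a) * X + C (8 * a ^ 3 - 2)

lemma natDegree_P3 (a : ℤ) : (P3 a).natDegree = 3 := by
  unfold P3
  compute_degree!
  generalize a ^ 3 = b
  omega

lemma monic_reversedP3 (a : ℤ) : (reversedP3 a).Monic := by
  unfold reversedP3
  monicity!

lemma aeval_inv_reversedP3 (a : ℤ) {r : ℚ} (hr : r ≠ 0) :
    aeval r⁻¹ (reversedP3 a) = r⁻¹ ^ 3 * aeval r (P3 a) := by
  simp only [reversedP3, P3, map_add, map_mul, map_pow, aeval_X, aeval_C, map_one,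
    algebraMap_int_eq, Int.coe_castRingHom]
  field_simp
  ring

lemma eval_reversedP3_ne_zero (a m : ℤ) : (reversedP3 a).eval m ≠ 0 := by
  intro h
  have hcube : ∀ x : ZMod 4, x ^ 3 + 2 ≠ 0 := by decide
  have hfour : (4 : ZMod 4) = 0 := rfl
  have h4 : (((reversedP3 a).eval m : ℤ) : ZMod 4) = 0 := by rw [h, Int.cast_zero]
  simp only [reversedP3, eval_add, eval_mul, eval_pow, eval_X, eval_C] at h4
  push_cast at h4
  apply hcube m
  linear_combination h4 + (1 - (a : ZMod 4) ^ 2 * m ^ 2 - (a ^ 4 + a) * m - 2 * a ^ 3) * hfour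

lemma aeval_P3_ne_zero (a : ℤ) (r : ℚ) : aeval r (P3 a) ≠ 0 := by
  intro hr
  have hr0 : r ≠ 0 := by
    rintro rfl
    simp [P3] at hr
  have hinv : aeval r⁻¹ (reversedP3 a) = 0 := by rw [aeval_inv_reversedP3 a hr0, hr, mul_zero]
  obtain ⟨m, hm⟩ : IsLocalization.IsInteger ℤ r⁻¹ :=
    isInteger_of_is_root_of_monic (monic_reversedP3 a) hinv
  rw [← hm, aeval_algebraMap_apply, coe_aeval_eq_eval, algebraMap_int_eq, Int.coe_castRingHom,
    Int.cast_eq_zero] at hinv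
  exact eval_reversedP3_ne_zero a m hinv

open Polynomial in
theorem P3a_irreducible_general (a : ℤ) :
    Irreducible ((C (8 * a ^ 3 - 2) * X ^ 3 + C (4 * a ^ 4 + 4 * a) * X ^ 2
      + C (4 * a ^ 2) * X + 1).map (Int.castRingHom ℚ)) := by
  change Irreducible ((P3 a).map (Int.castRingHom ℚ))
  have hdeg : ((P3 a).map (Int.castRingHom ℚ)).natDegree = 3 := by
    rw [natDegree_map_eq_of_injective (RingHom.injective_int _), natDegree_P3]
  rw [irreducible_iff_roots_eq_zero_of_degree_le_three (by omega) (by omega),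
    Multiset.eq_zero_iff_forall_notMem]
  intro r hr
  exact aeval_P3_ne_zero a r (by simpa [aeval_def, eval_map] using isRoot_of_mem_roots hr)

open Polynomial in
theorem P3a_irreducible (a : ℤ) (ha : 1 ≤ a) :
    Irreducible ((C (8 * a ^ 3 - 2) * X ^ 3 + C (4 * a ^ 4 + 4 * a) * X ^ 2
      + C (4 * a ^ 2) * X + 1).map (Int.castRingHom ℚ)) :=
  P3a_irreducible_general a
end

section
/- There exist constants C > 0 and A such that for every integer a ≥ A, the polynomial P_{4,a}(x) = (20a⁴−2)x⁴ + (16a⁵+4a)x³ + (16a⁶+4a²)x² + 8a³x + 1 has two distinct real roots r₁, r₂ with |r₁ − r₂| ≤ C·a^{−13}. -/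
set_option maxHeartbeats 1600000 in
theorem P4a_close_real_roots :
    ∃ C : ℝ, 0 < C ∧ ∃ A : ℤ, ∀ a : ℤ, A ≤ a →
      ∃ r₁ r₂ : ℝ, r₁ ≠ r₂ ∧
        (20 * (a : ℝ) ^ 4 - 2) * r₁ ^ 4 + (16 * a ^ 5 + 4 * a) * r₁ ^ 3
          + (16 * a ^ 6 + 4 * a ^ 2) * r₁ ^ 2 + 8 * a ^ 3 * r₁ + 1 = 0 ∧
        (20 * (a : ℝ) ^ 4 - 2) * r₂ ^ 4 + (16 * a ^ 5 + 4 * a) * r₂ ^ 3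
          + (16 * a ^ 6 + 4 * a ^ 2) * r₂ ^ 2 + 8 * a ^ 3 * r₂ + 1 = 0 ∧
        |r₁ - r₂| ≤ C * (a : ℝ) ^ (-13 : ℤ) := by
  refine ⟨1, one_pos, 2, fun a ha => ?_⟩
  have ha2 : (2:ℝ) ≤ (a:ℝ) := by exact_mod_cast ha
  have ha0 : (0:ℝ) < (a:ℝ) := by linarith
  have hane : (a:ℝ) ≠ 0 := ne_of_gt ha0
  set f : ℝ → ℝ := fun r => (20 * (a : ℝ) ^ 4 - 2) * r ^ 4 + (16 * (a:ℝ) ^ 5 + 4 * (a:ℝ)) * r ^ 3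
          + (16 * (a:ℝ) ^ 6 + 4 * (a:ℝ) ^ 2) * r ^ 2 + 8 * (a:ℝ) ^ 3 * r + 1 with hf
  have hcont : Continuous f := by rw [hf]; fun_prop
  set x₁ : ℝ := -(16*(a:ℝ)^10 + 2*(a:ℝ)^6 + 1)/(64*(a:ℝ)^13) with hx1
  set x₂ : ℝ := -(16*(a:ℝ)^10 + 2*(a:ℝ)^6)/(64*(a:ℝ)^13) with hx2
  set x₃ : ℝ := -(16*(a:ℝ)^10 + 2*(a:ℝ)^6 - 1)/(64*(a:ℝ)^13) with hx3
  have hden : (0:ℝ) < 64*(a:ℝ)^13 := by positivity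
  have hD4 : (0:ℝ) < (64*(a:ℝ)^13)^4 := by positivity
  have h12 : x₁ < x₂ := by
    rw [hx1, hx2, div_lt_div_iff₀ hden hden]; nlinarith [hden]
  have h23 : x₂ < x₃ := by
    rw [hx2, hx3, div_lt_div_iff₀ hden hden]; nlinarith [hden]
  have ht : (0:ℝ) ≤ (a:ℝ) - 2 := by linarith
  have hp : ∀ n : ℕ, (0:ℝ) ≤ ((a:ℝ)-2)^n := fun n => pow_nonneg ht n
  -- sign at x₁
  have hN1 : (0:ℝ) < (-2) + (20)*(a:ℝ)^4 + (-16)*(a:ℝ)^6 + (32)*(a:ℝ)^10 + (-48)*(a:ℝ)^12 + (1024)*(a:ℝ)^14 + (-288)*(a:ℝ)^16 + (-1088)*(a:ℝ)^18 + (3072)*(a:ℝ)^20 + (-896)*(a:ℝ)^22 + (12256)*(a:ℝ)^24 + (-33472)*(a:ℝ)^28 + (28672)*(a:ℝ)^30 + (61440)*(a:ℝ)^32 := by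
    have heq : ((-2) + (20)*(a:ℝ)^4 + (-16)*(a:ℝ)^6 + (32)*(a:ℝ)^10 + (-48)*(a:ℝ)^12 + (1024)*(a:ℝ)^14 + (-288)*(a:ℝ)^16 + (-1088)*(a:ℝ)^18 + (3072)*(a:ℝ)^20 + (-896)*(a:ℝ)^22 + (12256)*(a:ℝ)^24 + (-33472)*(a:ℝ)^28 + (28672)*(a:ℝ)^30 + (61440)*(a:ℝ)^32) = (285888841874750) + (4560584262579840)*((a:ℝ)-2)^1 + (35234502453498592)*((a:ℝ)-2)^2 + (175603731821557408)*((a:ℝ)-2)^3 + (634445451550112852)*((a:ℝ)-2)^4 + (1770391636031418176)*((a:ℝ)-2)^5 + (3969548489635812336)*((a:ℝ)-2)^6 + (7346080919625787392)*((a:ℝ)-2)^7 + (11437547991623829888)*((a:ℝ)-2)^8 + (15195837333119088768)*((a:ℝ)-2)^9 + (17413217659422133920)*((a:ℝ)-2)^10 + (17351893450793761664)*((a:ℝ)-2)^11 + (15130094158563604432)*((a:ℝ)-2)^12 + (11598751447279271936)*((a:ℝ)-2)^13 + (7844282424465430528)*((a:ℝ)-2)^14 + (4691279185253727232)*((a:ℝ)-2)^15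 + (2484414823370020320)*((a:ℝ)-2)^16 + (1165608061651535616)*((a:ℝ)-2)^17 + (484270728678691776)*((a:ℝ)-2)^18 + (177928235164848128)*((a:ℝ)-2)^19 + (57678123458471424)*((a:ℝ)-2)^20 + (16439993933004288)*((a:ℝ)-2)^21 + (4100912809095808)*((a:ℝ)-2)^22 + (889705106323968)*((a:ℝ)-2)^23 + (166517170572256)*((a:ℝ)-2)^24 + (26600041248768)*((a:ℝ)-2)^25 + (3575813423616)*((a:ℝ)-2)^26 + (396850718208)*((a:ℝ)-2)^27 + (35399974208)*((a:ℝ)-2)^28 + (2439659520)*((a:ℝ)-2)^29 + (121925632)*((a:ℝ)-2)^30 + (3932160)*((a:ℝ)-2)^31 + (61440)*((a:ℝ)-2)^32 := by ring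
    rw [heq]
    linarith [hp 1, hp 2, hp 3, hp 4, hp 5, hp 6, hp 7, hp 8, hp 9, hp 10, hp 11, hp 12, hp 13, hp 14, hp 15, hp 16, hp 17, hp 18, hp 19, hp 20, hp 21, hp 22, hp 23, hp 24, hp 25, hp 26, hp 27, hp 28, hp 29, hp 30, hp 31, hp 32]
  have hfx1 : 0 < f x₁ := by
    have key : f x₁ * (64*(a:ℝ)^13)^4 = (-2) + (20)*(a:ℝ)^4 + (-16)*(a:ℝ)^6 + (32)*(a:ℝ)^10 + (-48)*(a:ℝ)^12 + (1024)*(a:ℝ)^14 + (-288)*(a:ℝ)^16 + (-1088)*(a:ℝ)^18 + (3072)*(a:ℝ)^20 + (-896)*(a:ℝ)^22 + (12256)*(a:ℝ)^24 + (-33472)*(a:ℝ)^28 + (28672)*(a:ℝ)^30 + (61440)*(a:ℝ)^32 := by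
      rw [hf, hx1]; field_simp; ring
    have : f x₁ = ((-2) + (20)*(a:ℝ)^4 + (-16)*(a:ℝ)^6 + (32)*(a:ℝ)^10 + (-48)*(a:ℝ)^12 + (1024)*(a:ℝ)^14 + (-288)*(a:ℝ)^16 + (-1088)*(a:ℝ)^18 + (3072)*(a:ℝ)^20 + (-896)*(a:ℝ)^22 + (12256)*(a:ℝ)^24 + (-33472)*(a:ℝ)^28 + (28672)*(a:ℝ)^30 + (61440)*(a:ℝ)^32) / (64*(a:ℝ)^13)^4 := by
      rw [eq_div_iff (ne_of_gt hD4)]; exact key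
    rw [this]; exact div_pos hN1 hD4
  -- sign at x₂
  have hfx2 : f x₂ < 0 := by
    have key : f x₂ * (64*(a:ℝ)^13)^4 = (-32)*(a:ℝ)^24 + (-704)*(a:ℝ)^28 + (-4096)*(a:ℝ)^32 := by
      rw [hf, hx2]; field_simp; ring
    have hN2 : ((-32)*(a:ℝ)^24 + (-704)*(a:ℝ)^28 + (-4096)*(a:ℝ)^32) < 0 := by nlinarith [pow_pos ha0 24, pow_pos ha0 28, pow_pos ha0 32]
    have : f x₂ = ((-32)*(a:ℝ)^24 + (-704)*(a:ℝ)^28 + (-4096)*(a:ℝ)^32) / (64*(a:ℝ)^13)^4 := by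
      rw [eq_div_iff (ne_of_gt hD4)]; exact key
    rw [this]; exact div_neg_of_neg_of_pos hN2 hD4
  -- sign at x₃
  have hN3 : (0:ℝ) < (-2) + (20)*(a:ℝ)^4 + (16)*(a:ℝ)^6 + (-32)*(a:ℝ)^10 + (-48)*(a:ℝ)^12 + (-1024)*(a:ℝ)^14 + (-288)*(a:ℝ)^16 + (1088)*(a:ℝ)^18 + (3072)*(a:ℝ)^20 + (896)*(a:ℝ)^22 + (12256)*(a:ℝ)^24 + (-33472)*(a:ℝ)^28 + (-28672)*(a:ℝ)^30 + (61440)*(a:ℝ)^32 := by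
    have heq : ((-2) + (20)*(a:ℝ)^4 + (16)*(a:ℝ)^6 + (-32)*(a:ℝ)^10 + (-48)*(a:ℝ)^12 + (-1024)*(a:ℝ)^14 + (-288)*(a:ℝ)^16 + (1088)*(a:ℝ)^18 + (3072)*(a:ℝ)^20 + (896)*(a:ℝ)^22 + (12256)*(a:ℝ)^24 + (-33472)*(a:ℝ)^28 + (-28672)*(a:ℝ)^30 + (61440)*(a:ℝ)^32) = (224324243719486) + (3637082071993984)*((a:ℝ)-2)^1 + (28538931755151584)*((a:ℝ)-2)^2 + (144357114882951840)*((a:ℝ)-2)^3 + (528986588296029140)*((a:ℝ)-2)^4 + (1496195714971193536)*((a:ℝ)-2)^5 + (3398302713924226064)*((a:ℝ)-2)^6 + (6366797299761346560)*((a:ℝ)-2)^7 + (10029822675408280704)*((a:ℝ)-2)^8 + (13475279931542385536)*((a:ℝ)-2)^9 + (15606629434507710048)*((a:ℝ)-2)^10 + (15709538779816934272)*((a:ℝ)-2)^11 + (13829895843296745424)*((a:ℝ)-2)^12 + (10698613785793896448)*((a:ℝ)-2)^13 + (7297770142197985280)*((a:ℝ)-2)^14 + (4399805928883108864)*((a:ℝ)-2)^15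 + (2347786724661290976)*((a:ℝ)-2)^16 + (1109349430757538048)*((a:ℝ)-2)^17 + (463955111631367232)*((a:ℝ)-2)^18 + (171512777105747968)*((a:ℝ)-2)^19 + (55913872487803392)*((a:ℝ)-2)^20 + (16019934177767936)*((a:ℝ)-2)^21 + (4014991495510400)*((a:ℝ)-2)^22 + (874762269178368)*((a:ℝ)-2)^23 + (164338006821856)*((a:ℝ)-2)^24 + (26338541598720)*((a:ℝ)-2)^25 + (3550669226496)*((a:ℝ)-2)^26 + (394988185088)*((a:ℝ)-2)^27 + (35300195648)*((a:ℝ)-2)^28 + (2436218880)*((a:ℝ)-2)^29 + (121868288)*((a:ℝ)-2)^30 + (3932160)*((a:ℝ)-2)^31 + (61440)*((a:ℝ)-2)^32 := by ring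
    rw [heq]
    linarith [hp 1, hp 2, hp 3, hp 4, hp 5, hp 6, hp 7, hp 8, hp 9, hp 10, hp 11, hp 12, hp 13, hp 14, hp 15, hp 16, hp 17, hp 18, hp 19, hp 20, hp 21, hp 22, hp 23, hp 24, hp 25, hp 26, hp 27, hp 28, hp 29, hp 30, hp 31, hp 32]
  have hfx3 : 0 < f x₃ := by
    have key : f x₃ * (64*(a:ℝ)^13)^4 = (-2) + (20)*(a:ℝ)^4 + (16)*(a:ℝ)^6 + (-32)*(a:ℝ)^10 + (-48)*(a:ℝ)^12 + (-1024)*(a:ℝ)^14 + (-288)*(a:ℝ)^16 + (1088)*(a:ℝ)^18 + (3072)*(a:ℝ)^20 + (896)*(a:ℝ)^22 + (12256)*(a:ℝ)^24 + (-33472)*(a:ℝ)^28 + (-28672)*(a:ℝ)^30 + (61440)*(a:ℝ)^32 := by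
      rw [hf, hx3]; field_simp; ring
    have : f x₃ = ((-2) + (20)*(a:ℝ)^4 + (16)*(a:ℝ)^6 + (-32)*(a:ℝ)^10 + (-48)*(a:ℝ)^12 + (-1024)*(a:ℝ)^14 + (-288)*(a:ℝ)^16 + (1088)*(a:ℝ)^18 + (3072)*(a:ℝ)^20 + (896)*(a:ℝ)^22 + (12256)*(a:ℝ)^24 + (-33472)*(a:ℝ)^28 + (-28672)*(a:ℝ)^30 + (61440)*(a:ℝ)^32) / (64*(a:ℝ)^13)^4 := by
      rw [eq_div_iff (ne_of_gt hD4)]; exact key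
    rw [this]; exact div_pos hN3 hD4
  -- IVT
  obtain ⟨r₁, hr₁mem, hr₁⟩ := intermediate_value_Icc' (le_of_lt h12) hcont.continuousOn
    (Set.mem_Icc.mpr ⟨le_of_lt hfx2, le_of_lt hfx1⟩)
  obtain ⟨r₂, hr₂mem, hr₂⟩ := intermediate_value_Icc (le_of_lt h23) hcont.continuousOn
    (Set.mem_Icc.mpr ⟨le_of_lt hfx2, le_of_lt hfx3⟩)
  have hne : r₁ ≠ r₂ := by
    intro h
    have hx2r : r₁ = x₂ := le_antisymm hr₁mem.2 (by rw [h]; exact hr₂mem.1)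
    rw [← hx2r] at hfx2; rw [hr₁] at hfx2; exact lt_irrefl 0 hfx2
  have hinv : (0:ℝ) < ((a:ℝ)^13)⁻¹ := by positivity
  have hz : (a:ℝ)^(-13:ℤ) = ((a:ℝ)^(13:ℕ))⁻¹ := by
    rw [zpow_neg]; congr 1
  have hd : x₃ - x₁ = 2/(64*(a:ℝ)^13) := by rw [hx1, hx3]; ring
  have e1 : 2/(64*(a:ℝ)^13) = (2/64) * ((a:ℝ)^13)⁻¹ := by
    rw [div_eq_mul_inv, mul_inv]; ring
  have habs : |r₁ - r₂| ≤ 1 * (a:ℝ)^(-13:ℤ) := by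
    rw [hz, abs_le]
    have h1 : x₁ ≤ r₁ := hr₁mem.1
    have h2 : r₁ ≤ x₂ := hr₁mem.2
    have h3 : x₂ ≤ r₂ := hr₂mem.1
    have h4 : r₂ ≤ x₃ := hr₂mem.2
    constructor <;> push_cast <;> nlinarith [hinv, hd, e1]
  exact ⟨r₁, r₂, hne, by simpa only [hf] using hr₁, by simpa only [hf] using hr₂, habs⟩
end

section
/- There exist constants C > 0 and A such that for every integer a ≥ A, the polynomial P_{3,a}(x) = (8a³−2)x³ + (4a⁴+4a)x² + 4a²x + 1 has two distinct real roots whose distance is at most C·a^{−13/2}. -/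
set_option maxHeartbeats 1000000 in
theorem P3a_close_real_roots :
    ∃ C : ℝ, 0 < C ∧ ∃ A : ℤ, ∀ a : ℤ, A ≤ a →
      ∃ r₁ r₂ : ℝ, r₁ ≠ r₂ ∧
        (8 * (a : ℝ) ^ 3 - 2) * r₁ ^ 3 + (4 * a ^ 4 + 4 * a) * r₁ ^ 2 + 4 * a ^ 2 * r₁ + 1 = 0 ∧
        (8 * (a : ℝ) ^ 3 - 2) * r₂ ^ 3 + (4 * a ^ 4 + 4 * a) * r₂ ^ 2 + 4 * a ^ 2 * r₂ + 1 = 0 ∧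
        |r₁ - r₂| ≤ C * (a : ℝ) ^ (-(13 : ℝ) / 2) := by
  refine ⟨2, by norm_num, 4, fun a ha => ?_⟩
  have ha4 : (4:ℝ) ≤ (a:ℝ) := by exact_mod_cast ha
  have ha0 : (0:ℝ) < (a:ℝ) := by linarith
  set t : ℝ := Real.sqrt (a:ℝ) with hts
  have ht2 : (a:ℝ) = t ^ 2 := (Real.sq_sqrt ha0.le).symm
  have ht : (2:ℝ) ≤ t := by
    have h4 : Real.sqrt 4 = 2 := by
      rw [show (4:ℝ) = 2 ^ 2 by norm_num, Real.sqrt_sq (by norm_num)]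
    calc (2:ℝ) = Real.sqrt 4 := h4.symm
      _ ≤ t := Real.sqrt_le_sqrt ha4
  have ht0 : (0:ℝ) < t := by linarith
  have htne : t ≠ 0 := ne_of_gt ht0
  set f : ℝ → ℝ := fun x =>
    (8 * (a : ℝ) ^ 3 - 2) * x ^ 3 + (4 * (a:ℝ) ^ 4 + 4 * (a:ℝ)) * x ^ 2
      + 4 * (a:ℝ) ^ 2 * x + 1 with hf
  have hc : Continuous f := by fun_prop
  set m : ℝ := -1/(2*t^4) - 1/(4*t^10) with hm
  set d : ℝ := 1/t^13 with hd
  have hd0 : 0 < d := by positivity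
  -- value at the middle point
  have hfm : f m * (64 * t ^ 30) = -8*t^12 + 4*t^6 + 2 := by
    simp only [hf, hm, ht2]
    field_simp
    ring
  have hfmneg : f m < 0 := by
    have hQ : -8*t^12 + 4*t^6 + 2 < 0 := by nlinarith [pow_le_pow_left₀ (by norm_num : (0:ℝ) ≤ 2) ht 6, pow_le_pow_left₀ (by norm_num : (0:ℝ) ≤ 2) ht 12]
    have h64 : (0:ℝ) < 64 * t ^ 30 := by positivity
    nlinarith [hfm, hQ, h64]
  -- auxiliary monomial chain for t ≥ 2
  have hu : (8:ℝ) ≤ t^3 := by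
    calc (8:ℝ) = 2^3 := by norm_num
    _ ≤ t^3 := pow_le_pow_left₀ (by norm_num) ht 3
  -- value at the left point
  have hfz : f (m - d) * (64 * t ^ 39)
      = 248*t^21 - 160*t^18 - 508*t^15 - 190*t^9 - 488*t^6 + 96*t^3 + 128 := by
    simp only [hf, hm, hd, ht2]
    field_simp
    ring
  have hfy : f (m + d) * (64 * t ^ 39)
      = 248*t^21 + 160*t^18 - 508*t^15 - 190*t^9 + 488*t^6 + 96*t^3 - 128 := by
    simp only [hf, hm, hd, ht2]
    field_simp
    ring
  have c1 : 8*t^18 ≤ t^21 := by nlinarith [mul_le_mul_of_nonneg_right hu (pow_nonneg ht0.le 18)]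
  have c2 : 8*t^15 ≤ t^18 := by nlinarith [mul_le_mul_of_nonneg_right hu (pow_nonneg ht0.le 15)]
  have c3 : 8*t^12 ≤ t^15 := by nlinarith [mul_le_mul_of_nonneg_right hu (pow_nonneg ht0.le 12)]
  have c4 : 8*t^9 ≤ t^12 := by nlinarith [mul_le_mul_of_nonneg_right hu (pow_nonneg ht0.le 9)]
  have c5 : 8*t^6 ≤ t^9 := by nlinarith [mul_le_mul_of_nonneg_right hu (pow_nonneg ht0.le 6)]
  have c6 : 8*t^3 ≤ t^6 := by nlinarith [mul_le_mul_of_nonneg_right hu (pow_nonneg ht0.le 3)]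
  have c7 : (8:ℝ) ≤ t^3 := hu
  have h64 : (0:ℝ) < 64 * t ^ 39 := by positivity
  have hfzpos : 0 < f (m - d) := by
    have hQ : 0 < 248*t^21 - 160*t^18 - 508*t^15 - 190*t^9 - 488*t^6 + 96*t^3 + 128 := by
      nlinarith [c1, c2, c3, c4, c5, c6, c7, pow_pos ht0 3, pow_pos ht0 6, pow_pos ht0 9]
    nlinarith [hfz, hQ, h64]
  have hfypos : 0 < f (m + d) := by
    have hQ : 0 < 248*t^21 + 160*t^18 - 508*t^15 - 190*t^9 + 488*t^6 + 96*t^3 - 128 := by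
      nlinarith [c1, c2, c3, c4, c5, c6, c7, pow_pos ht0 3, pow_pos ht0 6, pow_pos ht0 9, pow_pos ht0 18]
    nlinarith [hfy, hQ, h64]
  -- IVT on both sides
  have hzm : m - d ≤ m := by linarith
  have hmy : m ≤ m + d := by linarith
  obtain ⟨r₁, hr₁mem, hfr₁⟩ :=
    intermediate_value_Icc' hzm hc.continuousOn
      (Set.mem_Icc.mpr ⟨hfmneg.le, hfzpos.le⟩)
  obtain ⟨r₂, hr₂mem, hfr₂⟩ :=
    intermediate_value_Icc hmy hc.continuousOn
      (Set.mem_Icc.mpr ⟨hfmneg.le, hfypos.le⟩)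
  obtain ⟨hr₁l, hr₁r⟩ := hr₁mem
  obtain ⟨hr₂l, hr₂r⟩ := hr₂mem
  refine ⟨r₁, r₂, ?_, ?_, ?_, ?_⟩
  · intro h
    have hrm : r₁ = m := le_antisymm hr₁r (h ▸ hr₂l)
    rw [hrm] at hfr₁
    rw [hfr₁] at hfmneg
    exact lt_irrefl 0 hfmneg
  · exact hfr₁
  · exact hfr₂
  · have h13 : t ^ 13 = (a:ℝ) ^ ((13:ℝ)/2) := by
      rw [hts, Real.sqrt_eq_rpow, ← Real.rpow_natCast ((a:ℝ) ^ ((1:ℝ)/2)) 13,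
        ← Real.rpow_mul ha0.le]
      norm_num
    have hrp : (a:ℝ) ^ (-(13:ℝ)/2) = 1 / t ^ 13 := by
      rw [show (-(13:ℝ)/2) = -((13:ℝ)/2) by ring, Real.rpow_neg ha0.le, h13, one_div]
    have hab : |r₁ - r₂| ≤ 2 * d := by
      rw [abs_sub_comm, abs_of_nonneg (by linarith : (0:ℝ) ≤ r₂ - r₁)]
      linarith
    rw [hrp]
    calc |r₁ - r₂| ≤ 2 * d := hab
      _ = 2 * (1 / t ^ 13) := by rw [hd]
end

section
/- The polynomial Q_a(x) = x^d − 2(ax − 1)² has height 2a² for a ≥ 2 and d ≥ 5, and there is a constant C such that for all sufficiently large a, Q_a has two distinct roots at distance at most C·a^{−(d+2)/2}. -/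
/-- The naive height of an integer polynomial: the maximum of the absolute values
of its coefficients. -/
noncomputable def polyHeight (P : Polynomial ℤ) : ℕ :=
  (Finset.range (P.natDegree + 1)).sup fun i => (P.coeff i).natAbs

/-!
Expanding, `Q_a = X ^ d - 2 a² X² + 4 a X - 2`, whose largest coefficient is `2 a²` once `a ≥ 2`.
For the roots, `Q_a (1/a) = a⁻ᵈ > 0`, while at `1/a ± δ` with `δ = a ^ (-(d + 2) / 2)` the square
term equals `2 (a δ)² = 2 a⁻ᵈ`, which beats `(1/a ± δ) ^ d ≤ a⁻ᵈ (1 + a δ) ^ d` as soon as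
`(1 + a δ) ^ d < 2`. The intermediate value theorem then gives a real root on each side of `1/a`.
-/

open Polynomial

theorem natAbs_coeff_le_polyHeight (P : ℤ[X]) (i : ℕ) : (P.coeff i).natAbs ≤ polyHeight P := by
  by_cases hi : i ≤ P.natDegree
  · exact Finset.le_sup (f := fun i => (P.coeff i).natAbs) (Finset.mem_range_succ_iff.mpr hi)
  · simp [coeff_eq_zero_of_natDegree_lt (not_le.mp hi)]

theorem polyHeight_le {P : ℤ[X]} {n : ℕ} (h : ∀ i, (P.coeff i).natAbs ≤ n) : polyHeight P ≤ n :=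
  Finset.sup_le fun i _ => h i

theorem polyHeight_eq_of_coeff {P : ℤ[X]} {j : ℕ} (h : ∀ i, (P.coeff i).natAbs ≤ (P.coeff j).natAbs) :
    polyHeight P = (P.coeff j).natAbs :=
  le_antisymm (polyHeight_le h) (natAbs_coeff_le_polyHeight P j)

noncomputable def Qpoly (d : ℕ) (a : ℤ) : ℤ[X] := X ^ d - C 2 * (C a * X - 1) ^ 2

theorem coeff_Qpoly (d : ℕ) (a : ℤ) (i : ℕ) :
    (Qpoly d a).coeff i = (if i = d then 1 else 0) - (if i = 2 then 2 * a ^ 2 else 0)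
      + (if i = 1 then 4 * a else 0) - (if i = 0 then 2 else 0) := by
  have : Qpoly d a = X ^ d - C (2 * a ^ 2) * X ^ 2 + C (4 * a) * X - C 2 := by
    simp only [Qpoly, map_mul, map_pow, map_ofNat]
    ring
  simp only [this, coeff_add, coeff_sub, coeff_C_mul, coeff_X_pow, coeff_X, coeff_C, mul_ite,
    mul_one, mul_zero, eq_comm (a := 1)]

theorem polyHeight_Qpoly {d : ℕ} (hd : 3 ≤ d) {a : ℤ} (ha : 2 ≤ a) :
    (polyHeight (Qpoly d a) : ℤ) = 2 * a ^ 2 := by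
  have h4a : 4 * a ≤ 2 * a ^ 2 := by nlinarith
  have h2 : 2 ≤ 2 * a ^ 2 := by nlinarith
  rw [polyHeight_eq_of_coeff (j := 2)]
  · simp [coeff_Qpoly, show 2 ≠ d by omega]
  · intro i
    simp only [coeff_Qpoly, show 2 ≠ d by omega]
    generalize 2 * a ^ 2 = t at *
    split_ifs <;> omega

theorem exists_two_roots_near_of_pos {f : ℝ → ℝ} {m δ : ℝ} (hδ : 0 ≤ δ)
    (hf : ContinuousOn f (Set.Icc (m - δ) (m + δ))) (hm : 0 < f m)
    (hleft : f (m - δ) ≤ 0) (hright : f (m + δ) ≤ 0) :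
    ∃ x₁ x₂, x₁ < x₂ ∧ f x₁ = 0 ∧ f x₂ = 0 ∧ x₂ - x₁ ≤ 2 * δ := by
  obtain ⟨x₁, ⟨hx₁l, hx₁r⟩, hx₁⟩ := intermediate_value_Icc (by linarith : m - δ ≤ m)
    (hf.mono (Set.Icc_subset_Icc le_rfl (by linarith))) ⟨hleft, hm.le⟩
  obtain ⟨x₂, ⟨hx₂l, hx₂r⟩, hx₂⟩ := intermediate_value_Icc' (by linarith : m ≤ m + δ)
    (hf.mono (Set.Icc_subset_Icc (by linarith) le_rfl)) ⟨hright, hm.le⟩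
  have hx₁m : x₁ ≠ m := by rintro rfl; linarith
  have hx₂m : x₂ ≠ m := by rintro rfl; linarith
  exact ⟨x₁, x₂, (lt_of_le_of_ne hx₁r hx₁m).trans (lt_of_le_of_ne hx₂l hx₂m.symm), hx₁, hx₂,
    by linarith⟩

theorem one_add_pow_lt_two {x : ℝ} (hx : 0 ≤ x) {n : ℕ} (hnx : n * x < 1 / 2) : (1 + x) ^ n < 2 :=
  calc (1 + x) ^ n ≤ Real.exp x ^ n := by gcongr; linarith [Real.add_one_le_exp x]
    _ = Real.exp (n * x) := by rw [← Real.exp_nat_mul]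
    _ ≤ 1 / (1 - n * x) := Real.exp_bound_div_one_sub_of_interval (by positivity) (by linarith)
    _ < 2 := by rw [div_lt_iff₀ (by linarith)]; linarith

theorem aeval_Qpoly_ofReal (d : ℕ) (a : ℤ) (x : ℝ) :
    aeval (x : ℂ) (Qpoly d a) = ((x ^ d - 2 * (a * x - 1) ^ 2 : ℝ) : ℂ) := by
  simp only [Qpoly, map_sub, map_mul, map_pow, aeval_X, eq_intCast, map_intCast, map_ofNat, map_one]
  push_cast
  ring

theorem exists_two_real_roots_near_inv {a δ : ℝ} {d : ℕ} (ha : 0 < a) (hδ : 0 ≤ δ)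
    (hδa : δ ≤ a⁻¹) (hsq : (a * δ) ^ 2 = a⁻¹ ^ d) (hsmall : (1 + a * δ) ^ d < 2) :
    ∃ x₁ x₂ : ℝ, x₁ < x₂ ∧ x₁ ^ d - 2 * (a * x₁ - 1) ^ 2 = 0 ∧
      x₂ ^ d - 2 * (a * x₂ - 1) ^ 2 = 0 ∧ x₂ - x₁ ≤ 2 * δ := by
  have hpow : 0 < a⁻¹ ^ d := by positivity
  apply exists_two_roots_near_of_pos (m := a⁻¹) hδ (by fun_prop)
  · simpa [ha.ne'] using hpow
  · have : (a⁻¹ - δ) ^ d ≤ a⁻¹ ^ d := by gcongr; linarith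
    rw [show a * (a⁻¹ - δ) - 1 = -(a * δ) by field_simp; ring, neg_sq, hsq]
    linarith
  · have : (a⁻¹ + δ) ^ d = a⁻¹ ^ d * (1 + a * δ) ^ d := by
      rw [← mul_pow]; field_simp
    rw [show a * (a⁻¹ + δ) - 1 = a * δ by field_simp; ring, hsq, this]
    nlinarith

theorem mul_rpow_neg_add_two_div_two {a : ℝ} (ha : 0 < a) (d : ℕ) :
    a * a ^ (-((d : ℝ) + 2) / 2) = a ^ (-((d : ℝ) / 2)) := by
  rw [mul_comm, ← Real.rpow_add_one ha.ne']
  ring_nf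

theorem mul_rpow_neg_add_two_div_two_sq {a : ℝ} (ha : 0 < a) (d : ℕ) :
    (a * a ^ (-((d : ℝ) + 2) / 2)) ^ 2 = a⁻¹ ^ d := by
  rw [mul_rpow_neg_add_two_div_two ha, ← Real.rpow_mul_natCast ha.le, inv_pow,
    ← Real.rpow_natCast, ← Real.rpow_neg ha.le]
  ring_nf

theorem mul_rpow_neg_add_two_div_two_le_inv {a : ℝ} (ha : 1 ≤ a) {d : ℕ} (hd : 2 ≤ d) :
    a * a ^ (-((d : ℝ) + 2) / 2) ≤ a⁻¹ := by
  have hd' : (2 : ℝ) ≤ d := by exact_mod_cast hd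
  rw [mul_rpow_neg_add_two_div_two (by linarith), ← Real.rpow_neg_one]
  exact Real.rpow_le_rpow_of_exponent_le ha (by linarith)

theorem exists_two_close_roots_Qpoly {d : ℕ} (hd : 2 ≤ d) {a : ℤ} (ha : 2 * d + 1 ≤ a) :
    ∃ x₁ x₂ : ℂ, x₁ ≠ x₂ ∧ aeval x₁ (Qpoly d a) = 0 ∧ aeval x₂ (Qpoly d a) = 0 ∧
      ‖x₁ - x₂‖ ≤ 2 * (a : ℝ) ^ (-((d : ℝ) + 2) / 2) := by
  have hα : (2 * d + 1 : ℝ) ≤ a := by exact_mod_cast ha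
  set α : ℝ := (a : ℝ)
  set δ : ℝ := α ^ (-((d : ℝ) + 2) / 2)
  have hα1 : 1 ≤ α := by linarith
  have hδ : 0 ≤ δ := by positivity
  have hαδ : α * δ ≤ α⁻¹ := mul_rpow_neg_add_two_div_two_le_inv hα1 hd
  have hsmall : d * (α * δ) < 1 / 2 :=
    calc d * (α * δ) ≤ d * α⁻¹ := by gcongr
      _ < 1 / 2 := by rw [← div_eq_mul_inv, div_lt_iff₀ (by linarith)]; linarith
  obtain ⟨x₁, x₂, hlt, hx₁, hx₂, hdist⟩ := exists_two_real_roots_near_inv (by linarith) hδ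
    (by nlinarith) (mul_rpow_neg_add_two_div_two_sq (by linarith) d)
    (one_add_pow_lt_two (by positivity) hsmall)
  refine ⟨x₁, x₂, by exact_mod_cast hlt.ne, by rw [aeval_Qpoly_ofReal, hx₁, Complex.ofReal_zero],
    by rw [aeval_Qpoly_ofReal, hx₂, Complex.ofReal_zero], ?_⟩
  rw [← Complex.ofReal_sub, Complex.norm_real, Real.norm_eq_abs, abs_sub_comm,
    abs_of_pos (by linarith)]
  exact hdist

open Polynomial in
theorem Qa_height_and_close_roots (d : ℕ) (hd : 5 ≤ d) :
    (∀ a : ℤ, 2 ≤ a → (polyHeight (X ^ d - Polynomial.C 2 * (Polynomial.C a * X - 1) ^ 2) : ℤ) = 2 * a ^ 2) ∧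
    ∃ C : ℝ, ∃ A : ℤ, ∀ a : ℤ, A ≤ a →
      ∃ x₁ x₂ : ℂ, x₁ ≠ x₂ ∧
        Polynomial.aeval x₁ (X ^ d - Polynomial.C 2 * (Polynomial.C a * X - 1) ^ 2 : Polynomial ℤ) = 0 ∧
        Polynomial.aeval x₂ (X ^ d - Polynomial.C 2 * (Polynomial.C a * X - 1) ^ 2 : Polynomial ℤ) = 0 ∧
        ‖x₁ - x₂‖ ≤ C * (a : ℝ) ^ (-((d : ℝ) + 2) / 2) :=
  ⟨fun _ ha => polyHeight_Qpoly (by omega) ha,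
    2, 2 * d + 1, fun _ ha => exists_two_close_roots_Qpoly (by omega) ha⟩
end

section
/- For a ≥ 1 an integer, the double root of (1+g(a,x))² (where g(a,x) = 2c_0 a x^{d−1} + ... + 2c_{d−2} a^{d−1} x) satisfies x₀ = −a^{−d+1}/(2c_{d−2}) + O(a^{−2d+1}) as a → ∞; that is, there exist constants C and A such that for a ≥ A, some real root x₀ of 1 + g(a,x) = 0 satisfies |x₀ + a^{−d+1}/(2c_{d−2})| ≤ C·a^{−2d+1}. -/
/-- `g(a, x) = 2 c₀ a x^{d-1} + 2 c₁ a² x^{d-2} + ⋯ + 2 c_{d-2} a^{d-1} x`. -/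
def gfun (d : ℕ) (a : ℤ) (x : ℝ) : ℝ :=
  ∑ i ∈ Finset.range (d - 1), 2 * (catalan i : ℝ) * (a : ℝ) ^ (i + 1) * x ^ (d - 1 - i)

lemma catalan_pos' (n : ℕ) : 0 < catalan n := by
  rcases Nat.eq_zero_or_pos (catalan n) with h1 | h1
  · have h := succ_mul_catalan_eq_centralBinom n
    rw [h1, mul_zero] at h
    exact absurd h.symm (Nat.centralBinom_pos n).ne'
  · exact h1

theorem root_of_one_add_g (d : ℕ) (hd : 3 ≤ d) :
    ∃ C : ℝ, ∃ A : ℤ, ∀ a : ℤ, A ≤ a →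
      ∃ x₀ : ℝ, 1 + gfun d a x₀ = 0 ∧
        |x₀ + (a : ℝ) ^ (-(d : ℤ) + 1) / (2 * (catalan (d - 2) : ℝ))|
          ≤ C * (a : ℝ) ^ (-2 * (d : ℤ) + 1) := by
  set cR : ℝ := 2 * (catalan (d - 2) : ℝ) with hcR
  set K : ℝ := ∑ i ∈ Finset.range (d - 2), 2 * (catalan i : ℝ) with hK
  have hK0 : 0 ≤ K := Finset.sum_nonneg fun i _ => by positivity
  set C : ℝ := K + 1 with hC
  have hC1 : 1 ≤ C := by linarith
  have hcR2 : (2:ℝ) ≤ cR := by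
    have h : (1:ℝ) ≤ (catalan (d-2) : ℝ) := by exact_mod_cast catalan_pos' (d-2)
    rw [hcR]; linarith
  have hcR0 : cR ≠ 0 := by linarith
  refine ⟨C, ⌈2*C⌉ + 1, fun a ha => ?_⟩
  have haR : 2*C + 1 ≤ (a:ℝ) := by
    have h1 := Int.le_ceil (2*C)
    have h2 : ((⌈2*C⌉ + 1 : ℤ) : ℝ) ≤ (a:ℝ) := by exact_mod_cast ha
    push_cast at h2; linarith
  have ha1 : (1:ℝ) ≤ (a:ℝ) := by linarith
  have ha0 : (0:ℝ) < (a:ℝ) := by linarith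
  have hane : (a:ℝ) ≠ 0 := ne_of_gt ha0
  set p : ℝ := (a:ℝ) ^ (-(d:ℤ) + 1) with hp
  set q : ℝ := (a:ℝ) ^ (-2*(d:ℤ) + 1) with hq
  have hp0 : 0 < p := zpow_pos ha0 _
  have hq0 : 0 < q := zpow_pos ha0 _
  have hadC : 2*C ≤ (a:ℝ) ^ (d:ℤ) := by
    have h1 : (a:ℝ) ≤ (a:ℝ) ^ (d:ℤ) := by
      calc (a:ℝ) = (a:ℝ) ^ (1:ℤ) := (zpow_one _).symm
      _ ≤ (a:ℝ) ^ (d:ℤ) := zpow_le_zpow_right₀ ha1 (by exact_mod_cast hd.trans' (by norm_num))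
    linarith
  have hadpos : 0 < (a:ℝ) ^ (d:ℤ) := zpow_pos ha0 _
  have hpq : q = (a:ℝ)^(-(d:ℤ)) * p := by
    rw [hq, hp, ← zpow_add₀ hane]; ring_nf
  have hmdC : (a:ℝ)^(-(d:ℤ)) ≤ 1/(2*C) := by
    rw [zpow_neg, div_eq_inv_mul, mul_one]
    exact inv_anti₀ (by linarith) hadC
  have hmd0 : 0 < (a:ℝ)^(-(d:ℤ)) := zpow_pos ha0 _
  -- endpoints
  set xp : ℝ := -p/cR + C*q with hxp
  set xm : ℝ := -p/cR - C*q with hxm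
  have hCq0 : 0 ≤ C*q := mul_nonneg (by linarith) hq0.le
  have hxle : xm ≤ xp := by rw [hxp, hxm]; linarith
  have hnd : -p/cR = -(p/cR) := neg_div _ _
  have hpcpos : 0 ≤ p/cR := div_nonneg hp0.le (by linarith)
  have hCq : C*q ≤ p/2 := by
    rw [hpq]
    have hCne : C ≠ 0 := by linarith
    calc C * ((a:ℝ)^(-(d:ℤ)) * p) ≤ C * (1/(2*C) * p) := by
          apply mul_le_mul_of_nonneg_left _ (by linarith)
          exact mul_le_mul_of_nonneg_right hmdC hp0.le
      _ = p/2 := by field_simp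
  have hbound : ∀ x, xm ≤ x → x ≤ xp → |x| ≤ p := by
    intro x h1 h2
    rw [hxm] at h1; rw [hxp] at h2
    have hpc : p / cR ≤ p/2 :=
      div_le_div_of_nonneg_left hp0.le (by norm_num) hcR2
    rw [abs_le]
    constructor <;> [skip; skip] <;> rw [hnd] at * <;> linarith
  -- split gfun
  have hsplit : ∀ x : ℝ, gfun d a x =
      (∑ i ∈ Finset.range (d-2), 2 * (catalan i : ℝ) * (a:ℝ)^(i+1) * x^(d-1-i))
      + cR * (a:ℝ)^((d:ℤ)-1) * x := by
    intro x
    rw [gfun, show d - 1 = (d-2) + 1 from by omega, Finset.sum_range_succ, hcR]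
    congr 1
    rw [show d-2+1-(d-2) = 1 from by omega, pow_one, ← zpow_natCast (a:ℝ) (d-2+1),
      show ((d-2+1 : ℕ) : ℤ) = (d:ℤ)-1 from by omega]
  -- remainder bound
  have hrem : ∀ x : ℝ, |x| ≤ p →
      |∑ i ∈ Finset.range (d-2), 2 * (catalan i : ℝ) * (a:ℝ)^(i+1) * x^(d-1-i)|
        ≤ K * (a:ℝ)^(-(d:ℤ)) := by
    intro x hx
    calc |∑ i ∈ Finset.range (d-2), 2 * (catalan i : ℝ) * (a:ℝ)^(i+1) * x^(d-1-i)|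
        ≤ ∑ i ∈ Finset.range (d-2), |2 * (catalan i : ℝ) * (a:ℝ)^(i+1) * x^(d-1-i)| :=
          Finset.abs_sum_le_sum_abs _ _
      _ ≤ ∑ i ∈ Finset.range (d-2), 2 * (catalan i : ℝ) * (a:ℝ)^(-(d:ℤ)) := by
          apply Finset.sum_le_sum
          intro i hi
          rw [Finset.mem_range] at hi
          have habs : |2 * (catalan i : ℝ) * (a:ℝ)^(i+1) * x^(d-1-i)|
              = 2 * (catalan i : ℝ) * ((a:ℝ)^(i+1) * |x|^(d-1-i)) := by
            rw [abs_mul, abs_mul, abs_pow, abs_pow,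
              abs_of_nonneg (show (0:ℝ) ≤ 2 * (catalan i : ℝ) by positivity),
              abs_of_nonneg ha0.le, mul_assoc]
          rw [habs]
          have key : (a:ℝ)^(i+1) * |x|^(d-1-i) ≤ (a:ℝ)^(-(d:ℤ)) := by
            have h3 : |x|^(d-1-i) ≤ p^(d-1-i) := pow_le_pow_left₀ (abs_nonneg x) hx _
            have h4 : (a:ℝ)^(i+1) * p^(d-1-i)
                = (a:ℝ)^(((i:ℤ)+1) + (-(d:ℤ)+1)*((d-1-i : ℕ):ℤ)) := by
              rw [hp, ← zpow_natCast (a:ℝ) (i+1),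
                ← zpow_natCast ((a:ℝ)^(-(d:ℤ)+1)) (d-1-i), ← zpow_mul,
                ← zpow_add₀ hane]
              norm_num
            have h5 : ((i:ℤ)+1) + (-(d:ℤ)+1)*((d-1-i : ℕ):ℤ) ≤ -(d:ℤ) := by
              have ht : ((d-1-i : ℕ):ℤ) = (d:ℤ)-1-i := by omega
              rw [ht]
              have h6 : (-(d:ℤ)+1) * ((d:ℤ)-1-i) ≤ (-(d:ℤ)+1) * 2 := by
                apply mul_le_mul_of_nonpos_left _ (by push_cast; omega)
                push_cast; omega
              have hi' : (i:ℤ) ≤ (d:ℤ) - 3 := by omega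
              linarith
            calc (a:ℝ)^(i+1) * |x|^(d-1-i) ≤ (a:ℝ)^(i+1) * p^(d-1-i) :=
                  mul_le_mul_of_nonneg_left h3 (by positivity)
              _ = (a:ℝ)^(((i:ℤ)+1) + (-(d:ℤ)+1)*((d-1-i : ℕ):ℤ)) := h4
              _ ≤ (a:ℝ)^(-(d:ℤ)) := zpow_le_zpow_right₀ ha1 h5
          exact mul_le_mul_of_nonneg_left key (by positivity)
      _ = K * (a:ℝ)^(-(d:ℤ)) := by rw [hK, ← Finset.sum_mul]
  -- endpoint values
  have hApq : (a:ℝ)^((d:ℤ)-1) * p = 1 := by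
    rw [hp, ← zpow_add₀ hane, show ((d:ℤ)-1) + (-(d:ℤ)+1) = 0 from by ring, zpow_zero]
  have hAq : (a:ℝ)^((d:ℤ)-1) * q = (a:ℝ)^(-(d:ℤ)) := by
    rw [hq, ← zpow_add₀ hane, show ((d:ℤ)-1) + (-2*(d:ℤ)+1) = -(d:ℤ) from by ring]
  have hfp : cR * (a:ℝ)^((d:ℤ)-1) * xp = -1 + cR*C*(a:ℝ)^(-(d:ℤ)) := by
    have h7 : cR * (a:ℝ)^((d:ℤ)-1) * xp
        = -((a:ℝ)^((d:ℤ)-1)*p) + cR*C*((a:ℝ)^((d:ℤ)-1)*q) := by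
      rw [hxp]; field_simp
    rw [h7, hApq, hAq]
  have hfm : cR * (a:ℝ)^((d:ℤ)-1) * xm = -1 - cR*C*(a:ℝ)^(-(d:ℤ)) := by
    have h7 : cR * (a:ℝ)^((d:ℤ)-1) * xm
        = -((a:ℝ)^((d:ℤ)-1)*p) - cR*C*((a:ℝ)^((d:ℤ)-1)*q) := by
      rw [hxm]; field_simp
    rw [h7, hApq, hAq]
  have hKC : K ≤ cR * C := by
    have h8 : 2 * C ≤ cR * C := mul_le_mul_of_nonneg_right hcR2 (by linarith)
    linarith
  -- sign at endpoints
  have hremp := hrem xp (hbound xp hxle le_rfl)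
  have hremm := hrem xm (hbound xm le_rfl hxle)
  rw [abs_le] at hremp hremm
  have hsgnp : 0 ≤ 1 + gfun d a xp := by
    rw [hsplit, hfp]
    have h9 : 0 ≤ (cR * C - K) * ((a:ℝ)^(-(d:ℤ))) :=
      mul_nonneg (by linarith) hmd0.le
    linarith [hremp.1]
  have hsgnm : 1 + gfun d a xm ≤ 0 := by
    rw [hsplit, hfm]
    have h9 : 0 ≤ (cR * C - K) * ((a:ℝ)^(-(d:ℤ))) :=
      mul_nonneg (by linarith) hmd0.le
    linarith [hremm.2]
  -- continuity and IVT
  have hcont : Continuous fun x : ℝ => 1 + gfun d a x := by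
    apply continuous_const.add
    unfold gfun
    exact continuous_finset_sum _ fun i _ => (continuous_const.mul (continuous_pow _))
  have hivt := intermediate_value_Icc hxle hcont.continuousOn
  have h0mem : (0:ℝ) ∈ Set.Icc (1 + gfun d a xm) (1 + gfun d a xp) := ⟨hsgnm, hsgnp⟩
  obtain ⟨x₀, hx₀, hfx₀⟩ := hivt h0mem
  refine ⟨x₀, hfx₀, ?_⟩
  rw [abs_le]
  obtain ⟨hx1, hx2⟩ := hx₀
  rw [hxm, hnd] at hx1
  rw [hxp, hnd] at hx2
  constructor <;> linarith
end
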